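/- arXiv:1501.00395 — 2 statements merged into one kernel-verified Lean document; each statement's English description precedes it below -/
import Mathlib

section
/- Let {α, S₀, ϑ₁, ϑ₂} be an admissible quadruple, let Λ(x) = [e^{-ixα}ϑ₁, e^{ixα}ϑ₂] and S(x) = S₀ + ∫₀ˣ Λ(t) j Λ(t)* dt, and let A be the 2n×2n block matrix A = [[α*, 0], [−ϑ₁ϑ₁*, α]]. Then for every x ≥ 0, e^{-ixα} S(x) e^{-ixα*} = [S₀, −iI_n] · e^{-2ixA} · [I_n; 0], where [S₀, −iI_n] is the n×2n matrix with blocks S₀ and −iI_n and [I_n; 0] is the 2n×n matrix with top block I_n and bottom block 0. Consequently the pseudo-exponential potential v(x) = 2ϑ₁*e^{ixα*}S(x)⁻¹e^{ixα}ϑ₂ also admits the representation v(x) = 2ϑ₁*([S₀, −iI_n] e^{-2ixA} [I_n; 0])⁻¹ϑ₂. -/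
open Matrix
open scoped ComplexOrder

/-- The `m×m` signature matrix `j = diag(I_{m₁}, −I_{m₂})`. -/
noncomputable def sigJ (m₁ m₂ : ℕ) : Matrix (Fin m₁ ⊕ Fin m₂) (Fin m₁ ⊕ Fin m₂) ℂ :=
  Matrix.fromBlocks 1 0 0 (-1)

/-- A quadruple `{α, S₀, ϑ₁, ϑ₂}` is admissible if `S₀` is Hermitian positive definite and
`αS₀ − S₀α* = i(ϑ₁ϑ₁* + ϑ₂ϑ₂*)`. -/
def Admissible {n m₁ m₂ : ℕ} (α S₀ : Matrix (Fin n) (Fin n) ℂ)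
    (θ₁ : Matrix (Fin n) (Fin m₁) ℂ) (θ₂ : Matrix (Fin n) (Fin m₂) ℂ) : Prop :=
  S₀.PosDef ∧ α * S₀ - S₀ * αᴴ = Complex.I • (θ₁ * θ₁ᴴ + θ₂ * θ₂ᴴ)

/-! Both sides, as functions of `x`, solve the linear matrix ODE
`Y' = -i(αY + Yα*) + e^{-2ixα}ϑ₁ϑ₁* - ϑ₂ϑ₂*e^{-2ixα*}` with `Y(0) = S₀`, hence agree.
For the left side this is the product rule with `S' = ΛjΛ*`. For the right side, write
`C = [S₀, -iI]`, `P = [I, 0]`, `R = [I; 0]`, `Q = [0; I]`; the admissibility identity is exactly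
`CA = αC - iϑ₂ϑ₂*P`, while `AR = Rα* - Qϑ₁ϑ₁*`, and the block triangular shape of `A` gives
`Pe^{sA} = e^{sα*}P` and `e^{sA}Q = Qe^{sα}`. Differentiating `Ce^{-2ixA}R` and splitting
`2A = A + A` between the two sides of `e^{-2ixA}` then produces the same equation.
The formula for `v` follows by inverting. -/

attribute [local instance] Matrix.linftyOpNormedAddCommGroup Matrix.linftyOpNormedSpace
  Matrix.linftyOpNormedRing Matrix.linftyOpNormedAlgebra

open NormedSpace

theorem ODE_solution_unique_linear {E : Type*} [NormedAddCommGroup E] [NormedSpace ℝ E]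
    [FiniteDimensional ℝ E] (L : E →ₗ[ℝ] E) {f g h : ℝ → E}
    (hf : ∀ t, HasDerivAt f (L (f t) + h t) t) (hg : ∀ t, HasDerivAt g (L (g t) + h t) t)
    (h0 : f 0 = g 0) : f = g :=
  ODE_solution_unique_univ (v := fun t y => L y + h t) (s := fun _ => Set.univ)
    (fun t => ((LinearMap.toContinuousLinearMap L).lipschitz.add
      (LipschitzWith.const (h t))).lipschitzOnWith)
    (fun t => ⟨hf t, trivial⟩) (fun t => ⟨hg t, trivial⟩) h0

section MatrixCalculus

variable {𝕜 : Type*} [RCLike 𝕜] {l m n : Type*} [Fintype l] [Fintype m] [Fintype n]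

theorem HasDerivAt.matrix_const_mul {f : ℝ → Matrix m n 𝕜} {f' : Matrix m n 𝕜} {t : ℝ}
    (X : Matrix l m 𝕜) (hf : HasDerivAt f f' t) : HasDerivAt (fun t => X * f t) (X * f') t :=
  (LinearMap.toContinuousLinearMap (mulLeftLinearMap n ℝ X)).hasFDerivAt.comp_hasDerivAt t hf

theorem HasDerivAt.matrix_mul_const {f : ℝ → Matrix l m 𝕜} {f' : Matrix l m 𝕜} {t : ℝ}
    (hf : HasDerivAt f f' t) (Y : Matrix m n 𝕜) : HasDerivAt (fun t => f t * Y) (f' * Y) t :=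
  (LinearMap.toContinuousLinearMap (mulRightLinearMap l ℝ Y)).hasFDerivAt.comp_hasDerivAt t hf

variable [DecidableEq m] [DecidableEq n]

theorem Matrix.mul_exp_eq_exp_mul {X : Matrix m n 𝕜} {A : Matrix n n 𝕜} {B : Matrix m m 𝕜}
    (h : X * A = B * X) : X * exp A = exp B * X := by
  have key := ODE_solution_unique_linear (mulLeftLinearMap n ℝ B) (h := 0)
    (f := fun t : ℝ => X * exp (t • A)) (g := fun t : ℝ => exp (t • B) * X)
    (fun t => ((hasDerivAt_exp_smul_const' A t).matrix_const_mul X).congr_deriv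
      (by rw [← Matrix.mul_assoc, h, Matrix.mul_assoc, Pi.zero_apply, add_zero]; rfl))
    (fun t => ((hasDerivAt_exp_smul_const' B t).matrix_mul_const X).congr_deriv
      (by rw [Matrix.mul_assoc, Pi.zero_apply, add_zero]; rfl))
    (by simp)
  simpa using congrFun key 1

end MatrixCalculus

theorem hasDerivAt_mul_ofReal (c : ℂ) (t : ℝ) : HasDerivAt (fun t : ℝ => c * t) c t := by
  simpa using (hasDerivAt_id t).ofReal_comp.const_mul c

section ComplexExp

variable {N : Type*} [Fintype N] [DecidableEq N]

theorem HasDerivAt.exp_smul_const {φ : ℝ → ℂ} {c : ℂ} {t : ℝ} (B : Matrix N N ℂ)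
    (hφ : HasDerivAt φ c t) :
    HasDerivAt (fun t => NormedSpace.exp (φ t • B)) (c • B * NormedSpace.exp (φ t • B)) t :=
  ((hasDerivAt_exp_smul_const' (𝕂 := ℂ) B (φ t)).scomp t hφ).congr_deriv
    (Matrix.smul_mul c B _).symm

theorem HasDerivAt.exp_smul_const' {φ : ℝ → ℂ} {c : ℂ} {t : ℝ} (B : Matrix N N ℂ)
    (hφ : HasDerivAt φ c t) :
    HasDerivAt (fun t => NormedSpace.exp (φ t • B)) (NormedSpace.exp (φ t • B) * c • B) t :=
  ((hasDerivAt_exp_smul_const (𝕂 := ℂ) B (φ t)).scomp t hφ).congr_deriv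
    (Matrix.mul_smul _ c B).symm

theorem exp_smul_mul_exp_smul {a b c : ℂ} (B : Matrix N N ℂ) (h : a + b = c) :
    exp (a • B) * exp (b • B) = exp (c • B) := by
  rw [← Matrix.exp_add_of_commute _ _ ((Commute.refl B).smul_left a |>.smul_right b),
    ← add_smul, h]

theorem inv_exp_neg_smul (c : ℂ) (B : Matrix N N ℂ) : (exp ((-c) • B))⁻¹ = exp (c • B) := by
  rw [← Matrix.exp_neg, neg_smul, neg_neg]

theorem exp_smul_mul_conjTranspose {m : Type*} [Fintype m] (c : ℂ) (B : Matrix N N ℂ)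
    (θ : Matrix N m ℂ) :
    exp (c • B) * θ * (exp (c • B) * θ)ᴴ = exp (c • B) * (θ * θᴴ) * exp ((star c) • Bᴴ) := by
  rw [conjTranspose_mul, ← Matrix.exp_conjTranspose, conjTranspose_smul]
  simp only [Matrix.mul_assoc]

end ComplexExp

section Blocks

theorem Matrix.fromCols_sub_fromCols {R m n₁ n₂ : Type*} [Sub R] (A₁ B₁ : Matrix m n₁ R)
    (A₂ B₂ : Matrix m n₂ R) :
    fromCols A₁ A₂ - fromCols B₁ B₂ = fromCols (A₁ - B₁) (A₂ - B₂) := by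
  ext i (j | j) <;> rfl

theorem Matrix.fromRows_sub_fromRows {R m₁ m₂ n : Type*} [Sub R] (A₁ B₁ : Matrix m₁ n R)
    (A₂ B₂ : Matrix m₂ n R) :
    fromRows A₁ A₂ - fromRows B₁ B₂ = fromRows (A₁ - B₁) (A₂ - B₂) := by
  ext (i | i) j <;> rfl

/- The zero and identity blocks below are typed explicitly: otherwise the products elaborate
through the multiplication instance of the type synonym `CStarMatrix`, and `rw` fails. -/

variable {N : Type*} [Fintype N] [DecidableEq N] (α K₁ : Matrix N N ℂ)

theorem fromCols_mul_fromBlocks_of_sylvester {S₀ K₂ : Matrix N N ℂ}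
    (hc : α * S₀ - S₀ * αᴴ = Complex.I • (K₁ + K₂)) :
    fromCols S₀ (-(Complex.I • (1 : Matrix N N ℂ))) * fromBlocks αᴴ 0 (-K₁) α =
      α * fromCols S₀ (-(Complex.I • (1 : Matrix N N ℂ))) -
        (Complex.I • K₂) * fromCols (1 : Matrix N N ℂ) (0 : Matrix N N ℂ) := by
  rw [fromCols_mul_fromBlocks, mul_fromCols, mul_fromCols, fromCols_sub_fromCols]
  congr 1
  · rw [sub_eq_iff_eq_add'.mp hc, smul_add]
    simp only [mul_neg, neg_mul, Algebra.smul_mul_assoc, one_mul, neg_neg, mul_one]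
    abel
  · simp

theorem fromBlocks_mul_fromRows_one_zero :
    fromBlocks αᴴ 0 (-K₁) α * fromRows (1 : Matrix N N ℂ) (0 : Matrix N N ℂ) =
      fromRows (1 : Matrix N N ℂ) (0 : Matrix N N ℂ) * αᴴ -
        fromRows (0 : Matrix N N ℂ) (1 : Matrix N N ℂ) * K₁ := by
  rw [fromBlocks_mul_fromRows]
  simp [fromRows_mul, fromRows_sub_fromRows]

theorem fromCols_one_zero_mul_exp (s : ℂ) :
    fromCols (1 : Matrix N N ℂ) (0 : Matrix N N ℂ) * exp (s • fromBlocks αᴴ 0 (-K₁) α) =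
      exp (s • αᴴ) * fromCols (1 : Matrix N N ℂ) (0 : Matrix N N ℂ) :=
  Matrix.mul_exp_eq_exp_mul (by simp [fromCols_mul_fromBlocks, mul_fromCols])

theorem exp_mul_fromRows_zero_one (s : ℂ) :
    exp (s • fromBlocks αᴴ 0 (-K₁) α) * fromRows (0 : Matrix N N ℂ) (1 : Matrix N N ℂ) =
      fromRows (0 : Matrix N N ℂ) (1 : Matrix N N ℂ) * exp (s • α) :=
  (Matrix.mul_exp_eq_exp_mul (by simp [fromBlocks_mul_fromRows, fromRows_mul])).symm

end Blocks

section SylvesterODE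

variable {N : Type*} [Fintype N] (α K₁ K₂ : Matrix N N ℂ)

noncomputable def sylvesterMap : Matrix N N ℂ →ₗ[ℝ] Matrix N N ℂ :=
  (-Complex.I) • (mulLeftLinearMap N ℝ α + mulRightLinearMap N ℝ αᴴ)

theorem sylvesterMap_apply (W : Matrix N N ℂ) :
    sylvesterMap α W = (-Complex.I) • (α * W + W * αᴴ) := rfl

variable [DecidableEq N]

noncomputable def sylvesterForcing (x : ℝ) : Matrix N N ℂ :=
  exp ((-(2 * Complex.I * x)) • α) * K₁ - K₂ * exp ((-(2 * Complex.I * x)) • αᴴ)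

theorem hasDerivAt_exp_mul_mul_exp {S : ℝ → Matrix N N ℂ} {x : ℝ}
    (hS : HasDerivAt S (exp ((-(Complex.I * x)) • α) * K₁ * exp ((Complex.I * x) • αᴴ) -
      exp ((Complex.I * x) • α) * K₂ * exp ((-(Complex.I * x)) • αᴴ)) x) :
    HasDerivAt (fun x : ℝ => exp ((-(Complex.I * x)) • α) * S x * exp ((-(Complex.I * x)) • αᴴ))
      (sylvesterMap α (exp ((-(Complex.I * x)) • α) * S x * exp ((-(Complex.I * x)) • αᴴ)) +
        sylvesterForcing α K₁ K₂ x) x := by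
  set E := exp ((-(Complex.I * x)) • α)
  set F := exp ((-(Complex.I * x)) • αᴴ)
  have hE' : HasDerivAt (fun x : ℝ => exp ((-(Complex.I * x)) • α)) ((-Complex.I) • α * E) x :=
    (hasDerivAt_mul_ofReal Complex.I x).neg.exp_smul_const α
  have hF' : HasDerivAt (fun x : ℝ => exp ((-(Complex.I * x)) • αᴴ)) (F * (-Complex.I) • αᴴ) x :=
    (hasDerivAt_mul_ofReal Complex.I x).neg.exp_smul_const' αᴴ
  refine ((hE'.mul hS).mul hF').congr_deriv ?_
  rw [sylvesterMap_apply, sylvesterForcing]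
  have hEE : E * E = exp ((-(2 * Complex.I * x)) • α) := exp_smul_mul_exp_smul α (by ring)
  have hFF : F * F = exp ((-(2 * Complex.I * x)) • αᴴ) := exp_smul_mul_exp_smul αᴴ (by ring)
  have hE : E * exp ((Complex.I * x) • α) = 1 := by
    rw [exp_smul_mul_exp_smul α (neg_add_cancel _), zero_smul, exp_zero]
  have hF : exp ((Complex.I * x) • αᴴ) * F = 1 := by
    rw [exp_smul_mul_exp_smul αᴴ (add_neg_cancel _), zero_smul, exp_zero]
  calc _ = (-Complex.I) • (α * (E * S x * F) + E * S x * F * αᴴ) +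
        ((E * E) * K₁ * (exp ((Complex.I * x) • αᴴ) * F) -
          (E * exp ((Complex.I * x) • α)) * K₂ * (F * F)) := by
        simp only [Pi.mul_apply, Matrix.add_mul, Matrix.sub_mul, Matrix.mul_sub,
          Matrix.smul_mul, Matrix.mul_smul, Matrix.mul_assoc, smul_add]
        abel
    _ = _ := by rw [hEE, hFF, hE, hF, Matrix.mul_one, Matrix.one_mul]

theorem hasDerivAt_fromCols_mul_exp_mul_fromRows {S₀ : Matrix N N ℂ}
    (hc : α * S₀ - S₀ * αᴴ = Complex.I • (K₁ + K₂)) (x : ℝ) :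
    HasDerivAt (fun x : ℝ => fromCols S₀ (-(Complex.I • (1 : Matrix N N ℂ))) *
        exp ((-(2 * Complex.I * x)) • fromBlocks αᴴ 0 (-K₁) α) *
        fromRows (1 : Matrix N N ℂ) (0 : Matrix N N ℂ))
      (sylvesterMap α (fromCols S₀ (-(Complex.I • (1 : Matrix N N ℂ))) *
        exp ((-(2 * Complex.I * x)) • fromBlocks αᴴ 0 (-K₁) α) *
        fromRows (1 : Matrix N N ℂ) (0 : Matrix N N ℂ)) + sylvesterForcing α K₁ K₂ x) x := by
  set A := fromBlocks αᴴ 0 (-K₁) α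
  set C := fromCols S₀ (-(Complex.I • (1 : Matrix N N ℂ)))
  set P := fromCols (1 : Matrix N N ℂ) (0 : Matrix N N ℂ)
  set R := fromRows (1 : Matrix N N ℂ) (0 : Matrix N N ℂ)
  set Q := fromRows (0 : Matrix N N ℂ) (1 : Matrix N N ℂ)
  set Ψ := exp ((-(2 * Complex.I * x)) • A)
  have hΨ : HasDerivAt (fun x : ℝ => exp ((-(2 * Complex.I * x)) • A))
      ((-(2 * Complex.I)) • A * Ψ) x :=
    (hasDerivAt_mul_ofReal (2 * Complex.I) x).neg.exp_smul_const A
  refine ((hΨ.matrix_const_mul C).matrix_mul_const R).congr_deriv ?_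
  have hAΨ : A * Ψ = Ψ * A := ((Commute.refl A).smul_right _).exp_right.eq
  have hPR : P * R = 1 := by simp [P, R, fromCols_mul_fromRows]
  have hCQ : C * Q = -(Complex.I • 1) := by simp [C, Q, fromCols_mul_fromRows]
  have hCA : C * A = α * C - (Complex.I • K₂) * P :=
    fromCols_mul_fromBlocks_of_sylvester α K₁ hc
  have hAR : A * R = R * αᴴ - Q * K₁ := fromBlocks_mul_fromRows_one_zero α K₁
  have hPΨR : P * (Ψ * R) = exp ((-(2 * Complex.I * x)) • αᴴ) := by
    rw [← Matrix.mul_assoc, fromCols_one_zero_mul_exp, Matrix.mul_assoc, hPR, Matrix.mul_one]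
  have hCΨQ : C * (Ψ * (Q * K₁)) = (-Complex.I) • (exp ((-(2 * Complex.I * x)) • α) * K₁) := by
    rw [← Matrix.mul_assoc Ψ, exp_mul_fromRows_zero_one, ← Matrix.mul_assoc, ← Matrix.mul_assoc,
      hCQ]
    simp
  rw [sylvesterMap_apply, sylvesterForcing]
  calc C * ((-(2 * Complex.I)) • A * Ψ) * R
      = (-Complex.I) • ((C * A) * Ψ * R + C * Ψ * (A * R)) := by
        rw [Matrix.mul_assoc C Ψ, ← Matrix.mul_assoc Ψ, ← hAΨ]
        simp only [Matrix.smul_mul, Matrix.mul_smul, Matrix.mul_assoc]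
        module
    _ = _ := by
        rw [hCA, hAR]
        simp only [Matrix.sub_mul, Matrix.mul_sub, Matrix.smul_mul, Matrix.mul_assoc, hPΨR, hCΨQ]
        match_scalars <;> ring_nf <;> simp [Complex.I_sq]

end SylvesterODE

theorem fromCols_mul_sigJ_mul_conjTranspose {N : Type*} {m₁ m₂ : ℕ} (X : Matrix N (Fin m₁) ℂ)
    (Y : Matrix N (Fin m₂) ℂ) :
    fromCols X Y * sigJ m₁ m₂ * (fromCols X Y)ᴴ = X * Xᴴ - Y * Yᴴ := by
  rw [sigJ, conjTranspose_fromCols_eq_fromRows_conjTranspose, fromCols_mul_fromBlocks,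
    fromCols_mul_fromRows]
  simp [sub_eq_add_neg]

theorem hasDerivAt_of_apply_eq_add_integral {p q : Type*} [Fintype p] [Fintype q]
    {S g : ℝ → Matrix p q ℂ} {S₀ : Matrix p q ℂ} (hg : Continuous g)
    (hS : ∀ (x : ℝ) (i : p) (j : q), S x i j = S₀ i j + ∫ t in (0:ℝ)..x, g t i j) (x : ℝ) :
    HasDerivAt S (g x) x := by
  have hS' : S = fun x => S₀ + ∫ t in (0:ℝ)..x, g t := by
    funext x
    ext i j
    rw [hS, Matrix.add_apply]
    congr 1
    exact (LinearMap.toContinuousLinearMap (entryLinearMap ℂ ℂ i j)).intervalIntegral_comp_comm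
      (hg.intervalIntegrable (μ := MeasureTheory.volume) 0 x)
  rw [hS']
  exact (hg.integral_hasStrictDerivAt 0 x).hasDerivAt.const_add S₀

/-- `e^{-ixα} S(x) e^{-ixα*} = [S₀, −iI_n] e^{-2ixA} [I_n; 0]` where
`A = [[α*, 0], [−ϑ₁ϑ₁*, α]]`; consequently the pseudo-exponential potential admits the
representation `v(x) = 2ϑ₁*([S₀, −iI_n] e^{-2ixA} [I_n; 0])⁻¹ϑ₂`. -/
theorem pseudoExponential_alternative_representation
    {n m₁ m₂ : ℕ} (α S₀ : Matrix (Fin n) (Fin n) ℂ)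
    (θ₁ : Matrix (Fin n) (Fin m₁) ℂ) (θ₂ : Matrix (Fin n) (Fin m₂) ℂ)
    (hadm : Admissible α S₀ θ₁ θ₂)
    (Λ : ℝ → Matrix (Fin n) (Fin m₁ ⊕ Fin m₂) ℂ)
    (hΛ : ∀ x : ℝ, Λ x = Matrix.fromCols
      (NormedSpace.exp ((-(Complex.I * (x : ℂ))) • α) * θ₁)
      (NormedSpace.exp ((Complex.I * (x : ℂ)) • α) * θ₂))
    (S : ℝ → Matrix (Fin n) (Fin n) ℂ)
    (hS : ∀ (x : ℝ) (i j : Fin n),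
      S x i j = S₀ i j + ∫ t in (0:ℝ)..x, (Λ t * sigJ m₁ m₂ * (Λ t)ᴴ) i j)
    (v : ℝ → Matrix (Fin m₁) (Fin m₂) ℂ)
    (hv : ∀ x : ℝ, v x = (2:ℂ) • (θ₁ᴴ * NormedSpace.exp ((Complex.I * (x : ℂ)) • αᴴ) *
      (S x)⁻¹ * NormedSpace.exp ((Complex.I * (x : ℂ)) • α) * θ₂))
    (A : Matrix (Fin n ⊕ Fin n) (Fin n ⊕ Fin n) ℂ)
    (hA : A = Matrix.fromBlocks αᴴ 0 (-(θ₁ * θ₁ᴴ)) α) :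
    ∀ x : ℝ, 0 ≤ x →
      (NormedSpace.exp ((-(Complex.I * (x : ℂ))) • α) * S x *
          NormedSpace.exp ((-(Complex.I * (x : ℂ))) • αᴴ) =
        Matrix.fromCols S₀ (-(Complex.I • (1 : Matrix (Fin n) (Fin n) ℂ))) *
          NormedSpace.exp ((-(2 * Complex.I * (x : ℂ))) • A) *
          Matrix.fromRows (1 : Matrix (Fin n) (Fin n) ℂ) 0) ∧
      v x = (2:ℂ) • (θ₁ᴴ *
        (Matrix.fromCols S₀ (-(Complex.I • (1 : Matrix (Fin n) (Fin n) ℂ))) *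
          NormedSpace.exp ((-(2 * Complex.I * (x : ℂ))) • A) *
          Matrix.fromRows (1 : Matrix (Fin n) (Fin n) ℂ) 0 : Matrix (Fin n) (Fin n) ℂ)⁻¹ * θ₂) := by
  subst hA
  have hintegrand : ∀ t : ℝ, Λ t * sigJ m₁ m₂ * (Λ t)ᴴ =
      exp ((-(Complex.I * t)) • α) * (θ₁ * θ₁ᴴ) * exp ((Complex.I * t) • αᴴ) -
        exp ((Complex.I * t) • α) * (θ₂ * θ₂ᴴ) * exp ((-(Complex.I * t)) • αᴴ) := fun t => by
    have hstar : star (Complex.I * t) = -(Complex.I * t) := by simp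
    rw [hΛ, fromCols_mul_sigJ_mul_conjTranspose, exp_smul_mul_conjTranspose,
      exp_smul_mul_conjTranspose, star_neg, hstar, neg_neg]
  have hderiv : ∀ x, HasDerivAt S (Λ x * sigJ m₁ m₂ * (Λ x)ᴴ) x :=
    hasDerivAt_of_apply_eq_add_integral (by simp only [hintegrand]; fun_prop) hS
  have hS₀ : S 0 = S₀ := by ext i j; simp [hS]
  have key := ODE_solution_unique_linear (sylvesterMap α)
    (fun x => hasDerivAt_exp_mul_mul_exp α _ _ (hintegrand x ▸ hderiv x))
    (hasDerivAt_fromCols_mul_exp_mul_fromRows α _ (θ₂ * θ₂ᴴ) hadm.2)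
    (by simp [hS₀, fromCols_mul_fromRows])
  intro x _
  have hx := congrFun key x
  refine ⟨hx, ?_⟩
  calc v x
      = (2:ℂ) • (θ₁ᴴ * (exp ((-(Complex.I * x)) • α) * S x *
          exp ((-(Complex.I * x)) • αᴴ))⁻¹ * θ₂) := by
        rw [hv x, Matrix.mul_inv_rev, Matrix.mul_inv_rev, inv_exp_neg_smul, inv_exp_neg_smul]
        simp only [Matrix.mul_assoc]
    -- not `rw [hx]`: in the statement this product carries the `CStarMatrix` instance
    _ = _ := congrArg (fun M => (2:ℂ) • (θ₁ᴴ * M⁻¹ * θ₂)) hx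
end

section
/- Let Σ₀ = {α, S₀, ϑ₁, ϑ₂} be a strongly admissible quadruple such that i is not an eigenvalue of α. For k ∈ ℕ₀ let W_{Σ_k}(λ) = I_m + iΛ_k*S_k⁻¹(λI_n − α)⁻¹Λ_k, let C_k be the pseudo-exponential potential generated by Σ₀, and define H_k⁺ = 2W_{Σ_k}(i)P₁W_{Σ_k}(−i)* and H_k⁻ = 2W_{Σ_k}(−i)P₂W_{Σ_k}(i)*, where P₁ = (I_m + j)/2 and P₂ = (I_m − j)/2. Then for every k ∈ ℕ₀: (I_m + C_k)H_k⁻ = 0, H_{k+1}⁻(I_m + C_k) = 0, (I_m − C_k)H_k⁺ = 0, and H_{k+1}⁺(I_m − C_k) = 0. -/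
open Matrix
open scoped ComplexOrder

/-- A pair `(α, θ)` is controllable if the columns of `θ, αθ, …, α^{n−1}θ` span `ℂⁿ`. -/
def Controllable {n p : ℕ} (α : Matrix (Fin n) (Fin n) ℂ) (θ : Matrix (Fin n) (Fin p) ℂ) :
    Prop :=
  Submodule.span ℂ
    {v : Fin n → ℂ | ∃ k : ℕ, k < n ∧ ∃ j : Fin p, v = fun i => (α ^ k * θ) i j} = ⊤

/-!
Two identities carry the proof. The Lyapunov identity `α S_k − S_k α* = i Λ_k Λ_k*` propagates
along the recursion together with positivity of `S_k` (one has
`S_{k+1} = (I − iα⁻¹) S_k (I − iα⁻¹)* + α⁻¹Λ_k (I + j) Λ_k* α⁻*`), and it makes the transfer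
matrix unitary at conjugate points: `W_k(λ̄)* W_k(λ) = I`. The Darboux step `Σ_k ↦ Σ_{k+1}`
intertwines the transfer matrices, `(λ − iC_k) W_k(λ) = W_{k+1}(λ) (λ − ij)`, which at `λ = ±i`
reads `(I ∓ C_k) W_k(±i) = W_{k+1}(±i) (I ∓ j)`. As `(I + j)(I − j) = 0`, multiplying out gives
the four relations. Controllability makes `α` invertible, and the Lyapunov identity puts the
spectrum of `α` in the closed upper half-plane, so that `α + i` is invertible as well.
-/

open Complex (I)

lemma sigJ_mul_self (m₁ m₂ : ℕ) : sigJ m₁ m₂ * sigJ m₁ m₂ = 1 := by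
  simp [sigJ, fromBlocks_multiply, fromBlocks_one]

lemma sigJ_conjTranspose (m₁ m₂ : ℕ) : (sigJ m₁ m₂)ᴴ = sigJ m₁ m₂ := by
  simp [sigJ, fromBlocks_conjTranspose]

lemma fromCols_mul_sigJ {n : Type*} {m₁ m₂ : ℕ} (A : Matrix n (Fin m₁) ℂ)
    (B : Matrix n (Fin m₂) ℂ) : fromCols A B * sigJ m₁ m₂ = fromCols A (-B) := by
  simp [sigJ, fromCols_mul_fromBlocks]

lemma one_add_mul_one_sub_of_mul_self {R : Type*} [Ring R] {j : R} (hj : j * j = 1) :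
    (1 + j) * (1 - j) = 0 := by
  rw [add_mul, one_mul, mul_sub, mul_one, hj]
  abel

lemma one_sub_mul_one_add_of_mul_self {R : Type*} [Ring R] {j : R} (hj : j * j = 1) :
    (1 - j) * (1 + j) = 0 := by
  rw [sub_mul, one_mul, mul_add, mul_one, hj]
  abel

section Lyapunov

variable {n m : Type*} [Fintype n] [Fintype m]

lemma posSemidef_one_add_of_involutive [DecidableEq m] {j : Matrix m m ℂ} (hj : j * j = 1)
    (hjH : jᴴ = j) : (1 + j).PosSemidef := by
  have h : 1 + j = (2⁻¹ : ℂ) • ((1 + j)ᴴ * (1 + j)) := by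
    simp only [conjTranspose_add, conjTranspose_one, hjH, add_mul, mul_add, hj, one_mul, mul_one]
    module
  rw [h]
  exact (posSemidef_conjTranspose_mul_self _).smul (by positivity)

lemma lyapunov_dotProduct_eigenvector {α S : Matrix n n ℂ} {L : Matrix n m ℂ}
    (hLy : α * S - S * αᴴ = I • (L * Lᴴ)) {u : n → ℂ} {μ : ℂ} (hu : αᴴ *ᵥ u = star μ • u) :
    (μ - star μ) * (star u ⬝ᵥ (S *ᵥ u)) = I * (star (Lᴴ *ᵥ u) ⬝ᵥ (Lᴴ *ᵥ u)) := by
  have h := congrArg (fun M => star u ⬝ᵥ (M *ᵥ u)) hLy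
  have hα : star u ᵥ* α = μ • star u := by
    rw [← conjTranspose_conjTranspose α, ← star_mulVec, hu, star_smul, star_star]
  have hL : star u ᵥ* L = star (Lᴴ *ᵥ u) := by
    rw [star_mulVec, conjTranspose_conjTranspose]
  simp only [sub_mulVec, smul_mulVec, ← mulVec_mulVec, dotProduct_sub, dotProduct_smul,
    dotProduct_mulVec (star u) α, dotProduct_mulVec (star u) L, hα, hL, hu] at h
  simpa [mulVec_smul, dotProduct_smul, smul_dotProduct, sub_mul] using h

lemma conjTranspose_mulVec_eq_zero_of_lyapunov {α S : Matrix n n ℂ} {L : Matrix n m ℂ}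
    (hLy : α * S - S * αᴴ = I • (L * Lᴴ)) {u : n → ℂ} (hu : αᴴ *ᵥ u = 0) : Lᴴ *ᵥ u = 0 := by
  have h := lyapunov_dotProduct_eigenvector hLy (μ := 0) (by rw [hu, star_zero, zero_smul])
  rwa [star_zero, sub_zero, zero_mul, zero_eq_mul, or_iff_right Complex.I_ne_zero,
    dotProduct_star_self_eq_zero] at h

lemma exists_conjTranspose_mulVec_eq_of_not_isUnit [DecidableEq n] {α : Matrix n n ℂ} {μ : ℂ}
    (h : ¬IsUnit (μ • 1 - α)) : ∃ u ≠ 0, αᴴ *ᵥ u = star μ • u := by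
  have hdet : (μ • 1 - α)ᴴ.det = 0 := by
    rw [det_conjTranspose, star_eq_zero]
    by_contra hdet
    exact h ((isUnit_iff_isUnit_det _).mpr (Ne.isUnit hdet))
  obtain ⟨u, hu, hu0⟩ := exists_mulVec_eq_zero_iff.mpr hdet
  refine ⟨u, hu, ?_⟩
  rw [conjTranspose_sub, conjTranspose_smul, conjTranspose_one, sub_mulVec, sub_eq_zero,
    smul_mulVec, one_mulVec] at hu0
  exact hu0.symm

lemma isUnit_smul_one_sub_of_im_neg [DecidableEq n] {α S : Matrix n n ℂ} {L : Matrix n m ℂ}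
    (hS : S.PosDef) (hLy : α * S - S * αᴴ = I • (L * Lᴴ)) {μ : ℂ} (hμ : μ.im < 0) :
    IsUnit (μ • 1 - α) := by
  by_contra hsing
  obtain ⟨u, hu0, hu⟩ := exists_conjTranspose_mulVec_eq_of_not_isUnit hsing
  have key := lyapunov_dotProduct_eigenvector hLy hu
  rw [Complex.star_def, Complex.sub_conj, mul_comm _ I, mul_assoc] at key
  have hq : 0 < star u ⬝ᵥ (S *ᵥ u) := hS.dotProduct_mulVec_pos hu0
  have hc : 0 ≤ star (Lᴴ *ᵥ u) ⬝ᵥ (Lᴴ *ᵥ u) := dotProduct_star_self_nonneg _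
  have h2 : ((2 * μ.im : ℝ) : ℂ) < 0 := by exact_mod_cast (by linarith : 2 * μ.im < 0)
  rw [← mul_left_cancel₀ Complex.I_ne_zero key] at hc
  exact (mul_neg_of_neg_of_pos h2 hq).not_ge hc

end Lyapunov

lemma isUnit_of_controllable {n p : ℕ} {α : Matrix (Fin n) (Fin n) ℂ}
    {θ : Matrix (Fin n) (Fin p) ℂ} (hctrl : Controllable α θ)
    (hker : ∀ u, αᴴ *ᵥ u = 0 → θᴴ *ᵥ u = 0) : IsUnit α := by
  by_contra hα
  obtain ⟨u, hu0, hu⟩ :=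
    exists_conjTranspose_mulVec_eq_of_not_isUnit (α := α) (μ := 0) (by simpa using hα)
  rw [star_zero, zero_smul] at hu
  have hpow : ∀ k, (α ^ k * θ)ᴴ *ᵥ u = 0 := by
    rintro (_ | k)
    · simpa using hker u hu
    · simp only [conjTranspose_mul, conjTranspose_pow, ← mulVec_mulVec, pow_succ', hu,
        mulVec_zero]
  -- `u` is orthogonal to all the generators `α^k θ e_i`, hence to everything
  have hφ : dotProductEquiv ℂ (Fin n) (star u) = 0 := by
    refine LinearMap.ext_on hctrl ?_
    rintro _ ⟨k, -, i, rfl⟩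
    have hcol : (fun r => (α ^ k * θ) r i) = (α ^ k * θ) *ᵥ Pi.single i 1 := by
      ext r
      simp [mulVec_single]
    simp only [hcol, dotProductEquiv_apply_apply]
    rw [dotProduct_mulVec, ← conjTranspose_conjTranspose (α ^ k * θ), ← star_mulVec, hpow]
    simp
  exact hu0 (dotProduct_star_self_eq_zero.mp (LinearMap.congr_fun hφ u))

lemma Admissible.lyapunov_fromCols {n m₁ m₂ : ℕ} {α S₀ : Matrix (Fin n) (Fin n) ℂ}
    {θ₁ : Matrix (Fin n) (Fin m₁) ℂ} {θ₂ : Matrix (Fin n) (Fin m₂) ℂ}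
    (h : Admissible α S₀ θ₁ θ₂) :
    α * S₀ - S₀ * αᴴ = I • (fromCols θ₁ θ₂ * (fromCols θ₁ θ₂)ᴴ) := by
  rw [conjTranspose_fromCols_eq_fromRows_conjTranspose, fromCols_mul_fromRows]
  exact h.2

lemma Admissible.isUnit {n m₁ m₂ : ℕ} {α S₀ : Matrix (Fin n) (Fin n) ℂ}
    {θ₁ : Matrix (Fin n) (Fin m₁) ℂ} {θ₂ : Matrix (Fin n) (Fin m₂) ℂ}
    (h : Admissible α S₀ θ₁ θ₂) (hctrl : Controllable α θ₁) : IsUnit α := by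
  refine isUnit_of_controllable hctrl fun u hu => ?_
  have hΛ := conjTranspose_mulVec_eq_zero_of_lyapunov h.lyapunov_fromCols hu
  rw [conjTranspose_fromCols_eq_fromRows_conjTranspose, fromRows_mulVec] at hΛ
  exact funext fun i => congrFun hΛ (Sum.inl i)

section Recursion

variable {n m : Type*} [Fintype n] [DecidableEq n] [Fintype m]

/-- `Λ_{k+1}` in terms of `Λ_k`, for an arbitrary signature matrix `j`
(see `nextL_fromCols_sigJ`). -/
noncomputable def nextL (α : Matrix n n ℂ) (L : Matrix n m ℂ) (j : Matrix m m ℂ) : Matrix n m ℂ :=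
  L + I • (α⁻¹ * L * j)

noncomputable def nextS (α S : Matrix n n ℂ) (L : Matrix n m ℂ) (j : Matrix m m ℂ) :
    Matrix n n ℂ :=
  S + α⁻¹ * S * (α⁻¹)ᴴ + α⁻¹ * (L * j * Lᴴ) * (α⁻¹)ᴴ

lemma nextL_fromCols_sigJ {m₁ m₂ : ℕ} (α : Matrix n n ℂ) (X : Matrix n (Fin m₁) ℂ)
    (Y : Matrix n (Fin m₂) ℂ) :
    nextL α (fromCols X Y) (sigJ m₁ m₂) = fromCols ((1 + I • α⁻¹) * X) ((1 - I • α⁻¹) * Y) := by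
  rw [nextL, Matrix.mul_assoc, fromCols_mul_sigJ, mul_fromCols, Matrix.add_mul, Matrix.sub_mul,
    Matrix.one_mul, Matrix.one_mul, Matrix.smul_mul, Matrix.smul_mul]
  ext i (a | b) <;> simp [sub_eq_add_neg]

variable {α S : Matrix n n ℂ} {L : Matrix n m ℂ} {j : Matrix m m ℂ}

lemma inv_mul_lyapunov (hα : IsUnit α) (hLy : α * S - S * αᴴ = I • (L * Lᴴ)) :
    S * (α⁻¹)ᴴ - α⁻¹ * S = I • (α⁻¹ * (L * (Lᴴ * (α⁻¹)ᴴ))) := by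
  have hαH : IsUnit αᴴ.det := by
    rw [det_conjTranspose]; exact ((isUnit_iff_isUnit_det _).mp hα).star
  have h := congrArg (fun X => α⁻¹ * X * (α⁻¹)ᴴ) hLy
  simp only [conjTranspose_nonsing_inv] at h ⊢
  simpa only [Matrix.mul_sub, Matrix.sub_mul, Matrix.mul_assoc, Matrix.mul_smul, Matrix.smul_mul,
    nonsing_inv_mul_cancel_left _ _ ((isUnit_iff_isUnit_det _).mp hα), mul_nonsing_inv _ hαH,
    Matrix.mul_one] using h

lemma lyapunov_nextS [DecidableEq m] (hα : IsUnit α) (hj : j * j = 1) (hjH : jᴴ = j)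
    (hLy : α * S - S * αᴴ = I • (L * Lᴴ)) :
    α * nextS α S L j - nextS α S L j * αᴴ = I • (nextL α L j * (nextL α L j)ᴴ) := by
  have hdet := (isUnit_iff_isUnit_det _).mp hα
  have hαH : IsUnit αᴴ.det := by rw [det_conjTranspose]; exact hdet.star
  have hSr := inv_mul_lyapunov hα hLy
  have hjj : ∀ X : Matrix m n ℂ, j * (j * X) = X := fun X => by
    rw [← Matrix.mul_assoc, hj, Matrix.one_mul]
  simp only [conjTranspose_nonsing_inv] at hSr ⊢
  simp only [nextS, nextL, conjTranspose_add, conjTranspose_smul, conjTranspose_mul, hjH,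
    conjTranspose_nonsing_inv, Complex.star_def, Complex.conj_I, Matrix.mul_add, Matrix.add_mul,
    Matrix.mul_smul, Matrix.smul_mul, Matrix.mul_assoc, mul_nonsing_inv_cancel_left _ _ hdet,
    nonsing_inv_mul _ hαH, Matrix.mul_one, Matrix.mul_neg, smul_neg, hjj, smul_add, smul_smul,
    Complex.I_mul_I, neg_smul, one_smul]
  linear_combination (norm := module) hLy + hSr

lemma nextS_eq_add [DecidableEq m] (hα : IsUnit α) (hLy : α * S - S * αᴴ = I • (L * Lᴴ)) :
    nextS α S L j = (1 - I • α⁻¹) * S * (1 - I • α⁻¹)ᴴ + α⁻¹ * L * (1 + j) * (α⁻¹ * L)ᴴ := by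
  have hSr := congrArg (I • ·) (inv_mul_lyapunov hα hLy)
  simp only [nextS, conjTranspose_sub, conjTranspose_smul, conjTranspose_mul, conjTranspose_one,
    Complex.star_def, Complex.conj_I, Matrix.mul_add, Matrix.add_mul, Matrix.mul_sub,
    Matrix.sub_mul, Matrix.mul_smul, Matrix.smul_mul, Matrix.mul_one, Matrix.one_mul,
    Matrix.mul_neg, Matrix.mul_assoc, smul_sub, smul_smul, Complex.I_mul_I, neg_smul,
    one_smul] at hSr ⊢
  linear_combination (norm := module) -hSr

lemma posDef_nextS [DecidableEq m] (hα : IsUnit α) (hi : IsUnit (I • 1 - α)) (hj : j * j = 1)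
    (hjH : jᴴ = j) (hS : S.PosDef) (hLy : α * S - S * αᴴ = I • (L * Lᴴ)) :
    (nextS α S L j).PosDef := by
  have hunit : IsUnit (1 - I • α⁻¹) := by
    have h : 1 - I • α⁻¹ = -(α⁻¹ * (I • 1 - α)) := by
      rw [Matrix.mul_sub, Matrix.mul_smul, Matrix.mul_one,
        nonsing_inv_mul _ ((isUnit_iff_isUnit_det _).mp hα), neg_sub]
    rw [h]
    exact ((isUnit_nonsing_inv_iff.mpr hα).mul hi).neg
  rw [nextS_eq_add hα hLy]
  exact ((IsUnit.posDef_star_right_conjugate_iff hunit).mpr hS).add_posSemidef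
    ((posSemidef_one_add_of_involutive hj hjH).mul_mul_conjTranspose_same _)

lemma posDef_and_lyapunov_of_recursion [DecidableEq m] {S : ℕ → Matrix n n ℂ}
    {Λ : ℕ → Matrix n m ℂ} (hα : IsUnit α) (hi : IsUnit (I • 1 - α)) (hj : j * j = 1)
    (hjH : jᴴ = j) (hΛ : ∀ k, Λ (k + 1) = nextL α (Λ k) j)
    (hS : ∀ k, S (k + 1) = nextS α (S k) (Λ k) j) (h₀ : (S 0).PosDef)
    (hLy₀ : α * S 0 - S 0 * αᴴ = I • (Λ 0 * (Λ 0)ᴴ)) (k : ℕ) :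
    (S k).PosDef ∧ α * S k - S k * αᴴ = I • (Λ k * (Λ k)ᴴ) := by
  induction k with
  | zero => exact ⟨h₀, hLy₀⟩
  | succ k ih =>
    rw [hS, hΛ]
    exact ⟨posDef_nextS hα hi hj hjH ih.1 ih.2, lyapunov_nextS hα hj hjH ih.2⟩

lemma conjTranspose_nextL_mul (hα : IsUnit α) (hjH : jᴴ = j) :
    I • ((nextL α L j)ᴴ * αᴴ) = j * Lᴴ + I • (Lᴴ * αᴴ) := by
  have hαH : IsUnit αᴴ.det := by
    rw [det_conjTranspose]; exact ((isUnit_iff_isUnit_det _).mp hα).star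
  simp only [nextL, conjTranspose_add, conjTranspose_smul, conjTranspose_mul, hjH,
    conjTranspose_nonsing_inv, show star I = -I from Complex.conj_I, Matrix.add_mul,
    Matrix.smul_mul, Matrix.mul_assoc, nonsing_inv_mul _ hαH, Matrix.mul_one, smul_add, smul_smul,
    mul_neg, Complex.I_mul_I, neg_neg, one_smul]
  abel

lemma nextS_mul_add (hα : IsUnit α) (hLy : α * S - S * αᴴ = I • (L * Lᴴ)) :
    nextS α S L j * αᴴ + I • (nextL α L j * Lᴴ) = (α + α⁻¹) * S := by
  have hαH : IsUnit αᴴ.det := by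
    rw [det_conjTranspose]; exact ((isUnit_iff_isUnit_det _).mp hα).star
  simp only [nextS, nextL, conjTranspose_nonsing_inv, Matrix.add_mul, Matrix.smul_mul,
    Matrix.mul_assoc, nonsing_inv_mul _ hαH, Matrix.mul_one, smul_add, smul_smul,
    Complex.I_mul_I, neg_smul, one_smul] at hLy ⊢
  linear_combination (norm := module) -hLy

lemma mul_nextL_sub [DecidableEq m] (hα : IsUnit α) (hj : j * j = 1) :
    α * nextL α L j - I • (nextL α L j * j) = (α + α⁻¹) * L := by
  simp only [nextL, Matrix.mul_add, Matrix.add_mul, Matrix.mul_smul, Matrix.smul_mul,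
    Matrix.mul_assoc, hj, Matrix.mul_one, mul_nonsing_inv_cancel_left _ _
      ((isUnit_iff_isUnit_det _).mp hα), smul_add, smul_smul, Complex.I_mul_I, neg_smul, one_smul]
  abel

lemma smul_nonsing_inv_smul_one_sub {z : ℂ} (hz : IsUnit (z • 1 - α)) :
    z • (z • 1 - α)⁻¹ = 1 + α * (z • 1 - α)⁻¹ := by
  have h := mul_nonsing_inv _ ((isUnit_iff_isUnit_det _).mp hz)
  rw [Matrix.sub_mul, Matrix.smul_mul, Matrix.one_mul] at h
  exact sub_eq_iff_eq_add.mp h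

lemma nonsing_inv_mul_lyapunov_mul_nonsing_inv (hS : IsUnit S)
    (hLy : α * S - S * αᴴ = I • (L * Lᴴ)) :
    S⁻¹ * (L * Lᴴ) * S⁻¹ = I • (αᴴ * S⁻¹) - I • (S⁻¹ * α) := by
  have hSd := (isUnit_iff_isUnit_det S).mp hS
  have hLL : L * Lᴴ = (-I) • (α * S - S * αᴴ) := by
    rw [hLy, smul_smul, neg_mul, Complex.I_mul_I, neg_neg, one_smul]
  rw [hLL]
  simp only [Matrix.sub_mul, Matrix.mul_sub, Matrix.smul_mul, Matrix.mul_smul, Matrix.mul_assoc,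
    mul_nonsing_inv _ hSd, nonsing_inv_mul_cancel_left _ _ hSd, Matrix.mul_one, smul_sub]
  module

end Recursion

lemma commute_nonsing_inv_left {R n : Type*} [CommRing R] [Fintype n] [DecidableEq n]
    {A B : Matrix n n R} (hA : IsUnit A) (h : Commute A B) : Commute A⁻¹ B := by
  lift A to (Matrix n n R)ˣ using hA
  rw [← coe_units_inv]
  exact h.units_inv_left

section Transfer

variable {n m : Type*} [Fintype n] [DecidableEq n] [Fintype m] [DecidableEq m]

/-- The transfer matrix function `W_Σ(λ)` of `Σ = {α, S, Λ}`. -/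
noncomputable def transferMatrix (α S : Matrix n n ℂ) (L : Matrix n m ℂ) (z : ℂ) :
    Matrix m m ℂ :=
  1 + I • (Lᴴ * S⁻¹ * (z • 1 - α)⁻¹ * L)

/-- The potential `C_k` generated by one step `Σ_k ↦ Σ_{k+1}`. -/
noncomputable def potential (α S : Matrix n n ℂ) (L : Matrix n m ℂ) (j : Matrix m m ℂ) :
    Matrix m m ℂ :=
  j + Lᴴ * S⁻¹ * L - (nextL α L j)ᴴ * (nextS α S L j)⁻¹ * nextL α L j

variable {α S : Matrix n n ℂ} {L : Matrix n m ℂ} {j : Matrix m m ℂ}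

lemma conjTranspose_transferMatrix_star_mul_self (hSH : S.IsHermitian) (hS : IsUnit S) {z : ℂ}
    (hz : IsUnit (z • 1 - α)) (hz' : IsUnit (star z • 1 - α))
    (hLy : α * S - S * αᴴ = I • (L * Lᴴ)) :
    (transferMatrix α S L (star z))ᴴ * transferMatrix α S L z = 1 := by
  set A := z • 1 - α with hAdef
  set B := (star z • 1 - α)ᴴ with hBdef
  have hA := (isUnit_iff_isUnit_det A).mp hz
  have hB : IsUnit B.det := by
    rw [det_conjTranspose]; exact ((isUnit_iff_isUnit_det _).mp hz').star
  have hSd := (isUnit_iff_isUnit_det S).mp hS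
  have hLL : L * Lᴴ = I • (A * S) - I • (S * B) := by
    have h := congrArg ((-I) • ·) hLy
    simp only [hAdef, hBdef, conjTranspose_sub, conjTranspose_smul, conjTranspose_one, star_star,
      Matrix.sub_mul, Matrix.mul_sub, Matrix.smul_mul, Matrix.mul_smul, Matrix.one_mul,
      Matrix.mul_one, smul_smul, neg_mul, Complex.I_mul_I, neg_neg, one_smul] at h ⊢
    linear_combination (norm := module) -h
  have key : ∀ X : Matrix n m ℂ, B⁻¹ * (S⁻¹ * (L * (Lᴴ * (S⁻¹ * (A⁻¹ * X))))) =
      I • (B⁻¹ * (S⁻¹ * X)) - I • (S⁻¹ * (A⁻¹ * X)) := fun X => by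
    rw [← Matrix.mul_assoc L, hLL]
    simp only [Matrix.sub_mul, Matrix.mul_sub, Matrix.smul_mul, Matrix.mul_smul, Matrix.mul_assoc,
      nonsing_inv_mul_cancel_left _ _ hSd, nonsing_inv_mul_cancel_left _ _ hB,
      mul_nonsing_inv_cancel_left _ _ hSd, mul_nonsing_inv_cancel_left _ _ hA]
  simp only [transferMatrix, conjTranspose_add, conjTranspose_one, conjTranspose_smul,
    conjTranspose_mul, conjTranspose_conjTranspose, conjTranspose_nonsing_inv, hSH.eq,
    show star I = -I from Complex.conj_I, ← hBdef, ← hAdef, Matrix.mul_add, Matrix.add_mul,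
    Matrix.mul_one, Matrix.one_mul, Matrix.smul_mul, Matrix.mul_smul, Matrix.mul_assoc, key,
    Matrix.mul_sub, smul_add, smul_sub, smul_smul]
  match_scalars <;> ring_nf <;> simp

lemma transferMatrix_unitary_at_I (hSH : S.IsHermitian) (hS : IsUnit S)
    (hI : IsUnit (I • 1 - α)) (hnegI : IsUnit ((-I) • 1 - α))
    (hLy : α * S - S * αᴴ = I • (L * Lᴴ)) :
    (transferMatrix α S L (-I))ᴴ * transferMatrix α S L I = 1 ∧
      (transferMatrix α S L I)ᴴ * transferMatrix α S L (-I) = 1 := by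
  have hstar : star I = -I := Complex.conj_I
  constructor
  · simpa only [hstar] using
      conjTranspose_transferMatrix_star_mul_self hSH hS hI (by rwa [hstar]) hLy
  · simpa only [star_neg, hstar, neg_neg] using
      conjTranspose_transferMatrix_star_mul_self hSH hS hnegI (by rwa [star_neg, hstar, neg_neg])
        hLy

theorem smul_one_sub_potential_mul_transferMatrix (hα : IsUnit α) (hj : j * j = 1)
    (hjH : jᴴ = j) (hS : IsUnit S) (hS' : IsUnit (nextS α S L j)) {z : ℂ}
    (hz : IsUnit (z • 1 - α)) (hLy : α * S - S * αᴴ = I • (L * Lᴴ)) :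
    (z • 1 - I • potential α S L j) * transferMatrix α S L z =
      transferMatrix α (nextS α S L j) (nextL α L j) z * (z • 1 - I • j) := by
  have hL'adj := conjTranspose_nextL_mul (L := L) hα hjH
  have hS'step := nextS_mul_add (j := j) hα hLy
  have hL'step := mul_nextL_sub (L := L) hα hj
  have hSLLS := nonsing_inv_mul_lyapunov_mul_nonsing_inv hS hLy
  have hzG := smul_nonsing_inv_smul_one_sub hz
  set L' := nextL α L j
  set S' := nextS α S L j
  set G := (z • 1 - α)⁻¹
  have hSd := (isUnit_iff_isUnit_det S).mp hS
  have hS'd := (isUnit_iff_isUnit_det S').mp hS'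
  have hcomm : Commute (z • 1 - α) α := ((Commute.one_left α).smul_left z).sub_left (.refl α)
  have hGα : ∀ X : Matrix n m ℂ, G * (α * X) = α * (G * X) := fun X => by
    rw [← Matrix.mul_assoc, (commute_nonsing_inv_left hz hcomm).eq, Matrix.mul_assoc]
  have hGr : ∀ X : Matrix n m ℂ, G * (α⁻¹ * X) = α⁻¹ * (G * X) := fun X => by
    rw [← Matrix.mul_assoc,
      (commute_nonsing_inv_left hz (commute_nonsing_inv_left hα hcomm.symm).symm).eq,
      Matrix.mul_assoc]
  -- The two sides differ by a combination of these relations, expanded into right-nested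
  -- products so that `linear_combination` sees the same atoms on both sides.
  have f₁ : ∀ (K : Matrix m n ℂ) (Y : Matrix n n ℂ) (X : Matrix n m ℂ),
      z • (K * (Y * (G * X))) = K * (Y * X) + K * (Y * (α * (G * X))) := fun K Y X => by
    rw [← Matrix.mul_smul, ← Matrix.mul_smul, ← Matrix.smul_mul, hzG, Matrix.add_mul,
      Matrix.mul_add, Matrix.mul_add, Matrix.one_mul, Matrix.mul_assoc]
  have f₂ := congrArg (fun M => Lᴴ * (M * (G * L))) hSLLS
  have f₃ := congrArg (· * (S⁻¹ * (G * L))) hL'adj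
  have f₄ := congrArg (fun M => L'ᴴ * (S'⁻¹ * (M * (S⁻¹ * (G * L))))) hS'step
  have f₅ := congrArg (fun M => L'ᴴ * (S'⁻¹ * (G * M))) hL'step
  simp only [Matrix.add_mul, Matrix.mul_add, Matrix.sub_mul, Matrix.mul_sub, Matrix.smul_mul,
    Matrix.mul_smul, Matrix.mul_assoc, nonsing_inv_mul_cancel_left _ _ hS'd,
    mul_nonsing_inv_cancel_left _ _ hSd, hGα, hGr] at f₂ f₃ f₄ f₅
  simp only [potential, transferMatrix, Matrix.mul_add, Matrix.add_mul, Matrix.mul_sub,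
    Matrix.sub_mul, Matrix.mul_one, Matrix.one_mul, Matrix.smul_mul, Matrix.mul_smul,
    Matrix.mul_assoc]
  linear_combination (norm := skip)
    I • f₁ Lᴴ S⁻¹ L - I • f₁ L'ᴴ S'⁻¹ L' + f₂ - f₃ + I • f₄ - I • f₅
  match_scalars <;> ring_nf <;> simp

lemma potential_mul_transferMatrix_at_I (hα : IsUnit α) (hj : j * j = 1) (hjH : jᴴ = j)
    (hS : IsUnit S) (hS' : IsUnit (nextS α S L j)) (hI : IsUnit (I • 1 - α))
    (hnegI : IsUnit ((-I) • 1 - α)) (hLy : α * S - S * αᴴ = I • (L * Lᴴ)) :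
    (1 - potential α S L j) * transferMatrix α S L I =
        transferMatrix α (nextS α S L j) (nextL α L j) I * (1 - j) ∧
      (1 + potential α S L j) * transferMatrix α S L (-I) =
        transferMatrix α (nextS α S L j) (nextL α L j) (-I) * (1 + j) := by
  have hp := smul_one_sub_potential_mul_transferMatrix hα hj hjH hS hS' hI hLy
  have hm := smul_one_sub_potential_mul_transferMatrix hα hj hjH hS hS' hnegI hLy
  have hneg : ∀ M : Matrix m m ℂ, (-I) • 1 - I • M = (-I) • (1 + M) := fun M => by module
  rw [← smul_sub, ← smul_sub, Matrix.smul_mul, Matrix.mul_smul] at hp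
  rw [hneg, hneg, Matrix.smul_mul, Matrix.mul_smul] at hm
  exact ⟨smul_right_injective _ Complex.I_ne_zero hp,
    smul_right_injective _ (neg_ne_zero.mpr Complex.I_ne_zero) hm⟩

end Transfer

lemma mul_eq_zero_of_intertwines {R m : Type*} [CommRing R] [Fintype m] [DecidableEq m]
    {A X X' Z Z' p q : Matrix m m R} (hA : A * X = X' * p) (hZ : Z * X = 1) (hZ' : Z' * X' = 1)
    (hpq : p * q = 0) (hqp : q * p = 0) :
    A * (X * q * Z) = 0 ∧ X' * q * Z' * A = 0 := by
  have hA' : A = X' * p * Z := by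
    rw [← hA, Matrix.mul_assoc, mul_eq_one_comm.mp hZ, Matrix.mul_one]
  constructor
  · rw [← Matrix.mul_assoc, ← Matrix.mul_assoc, hA, Matrix.mul_assoc X', hpq, Matrix.mul_zero,
      Matrix.zero_mul]
  · rw [hA', show X' * q * Z' * (X' * p * Z) = X' * (q * (Z' * X') * p) * Z by
      simp only [Matrix.mul_assoc], hZ', Matrix.mul_one, hqp, Matrix.mul_zero, Matrix.zero_mul]

/-- the matrices `H_k⁺ = 2W_{Σ_k}(i)P₁W_{Σ_k}(−i)*` and
`H_k⁻ = 2W_{Σ_k}(−i)P₂W_{Σ_k}(i)*` satisfy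
`(I + C_k)H_k⁻ = H_{k+1}⁻(I + C_k) = 0` and `(I − C_k)H_k⁺ = H_{k+1}⁺(I − C_k) = 0`. -/
theorem H_plus_minus_annihilation
    {n m₁ m₂ : ℕ} (α S₀ : Matrix (Fin n) (Fin n) ℂ)
    (θ₁ : Matrix (Fin n) (Fin m₁) ℂ) (θ₂ : Matrix (Fin n) (Fin m₂) ℂ)
    (hadm : Admissible α S₀ θ₁ θ₂) (hctrl : Controllable α θ₁)
    (hi : Complex.I ∉ spectrum ℂ α)
    (Λ : ℕ → Matrix (Fin n) (Fin m₁ ⊕ Fin m₂) ℂ)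
    (hΛ : ∀ k : ℕ, Λ k = Matrix.fromCols
      ((1 + Complex.I • α⁻¹) ^ k * θ₁) ((1 - Complex.I • α⁻¹) ^ k * θ₂))
    (S : ℕ → Matrix (Fin n) (Fin n) ℂ)
    (hS0 : S 0 = S₀)
    (hS : ∀ k : ℕ, S (k + 1) =
      S k + α⁻¹ * S k * (α⁻¹)ᴴ + α⁻¹ * (Λ k * sigJ m₁ m₂ * (Λ k)ᴴ) * (α⁻¹)ᴴ)
    (W : ℕ → ℂ → Matrix (Fin m₁ ⊕ Fin m₂) (Fin m₁ ⊕ Fin m₂) ℂ)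
    (hW : ∀ (k : ℕ) (lam : ℂ),
      W k lam = 1 + Complex.I • ((Λ k)ᴴ * (S k)⁻¹ * (lam • 1 - α)⁻¹ * Λ k))
    (C : ℕ → Matrix (Fin m₁ ⊕ Fin m₂) (Fin m₁ ⊕ Fin m₂) ℂ)
    (hC : ∀ k : ℕ, C k = sigJ m₁ m₂ + (Λ k)ᴴ * (S k)⁻¹ * Λ k
      - (Λ (k + 1))ᴴ * (S (k + 1))⁻¹ * Λ (k + 1))
    (P₁ P₂ : Matrix (Fin m₁ ⊕ Fin m₂) (Fin m₁ ⊕ Fin m₂) ℂ)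
    (hP₁ : P₁ = (2:ℂ)⁻¹ • (1 + sigJ m₁ m₂)) (hP₂ : P₂ = (2:ℂ)⁻¹ • (1 - sigJ m₁ m₂))
    (Hp Hm : ℕ → Matrix (Fin m₁ ⊕ Fin m₂) (Fin m₁ ⊕ Fin m₂) ℂ)
    (hHp : ∀ k : ℕ, Hp k = (2:ℂ) • (W k Complex.I * P₁ * (W k (-Complex.I))ᴴ))
    (hHm : ∀ k : ℕ, Hm k = (2:ℂ) • (W k (-Complex.I) * P₂ * (W k Complex.I)ᴴ)) :
    ∀ k : ℕ,
      (1 + C k) * Hm k = 0 ∧ Hm (k + 1) * (1 + C k) = 0 ∧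
      (1 - C k) * Hp k = 0 ∧ Hp (k + 1) * (1 - C k) = 0 := by
  have hj := sigJ_mul_self m₁ m₂
  have hjH := sigJ_conjTranspose m₁ m₂
  have hΛsucc : ∀ k, Λ (k + 1) = nextL α (Λ k) (sigJ m₁ m₂) := fun k => by
    rw [hΛ, hΛ, nextL_fromCols_sigJ, pow_succ', pow_succ', Matrix.mul_assoc, Matrix.mul_assoc]
  have hSsucc : ∀ k, S (k + 1) = nextS α (S k) (Λ k) (sigJ m₁ m₂) := hS
  have hLy₀ : α * S 0 - S 0 * αᴴ = I • (Λ 0 * (Λ 0)ᴴ) := by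
    rw [hS0, hΛ 0, pow_zero, pow_zero, Matrix.one_mul, Matrix.one_mul]
    exact hadm.lyapunov_fromCols
  have hS₀ : (S 0).PosDef := hS0 ▸ hadm.1
  have hα := hadm.isUnit hctrl
  have hI : IsUnit (I • 1 - α) := by
    rwa [spectrum.notMem_iff, Algebra.algebraMap_eq_smul_one] at hi
  have hnegI : IsUnit ((-I) • 1 - α) := isUnit_smul_one_sub_of_im_neg hS₀ hLy₀ (by simp)
  have hSk := posDef_and_lyapunov_of_recursion hα hI hj hjH hΛsucc hSsucc hS₀ hLy₀
  have hWk : ∀ k z, W k z = transferMatrix α (S k) (Λ k) z := hW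
  have hunit : ∀ k, (W k (-I))ᴴ * W k I = 1 ∧ (W k I)ᴴ * W k (-I) = 1 := fun k => by
    simp only [hWk]
    exact transferMatrix_unitary_at_I (hSk k).1.isHermitian (hSk k).1.isUnit hI hnegI (hSk k).2
  intro k
  have hfac : (1 - C k) * W k I = W (k + 1) I * (1 - sigJ m₁ m₂) ∧
      (1 + C k) * W k (-I) = W (k + 1) (-I) * (1 + sigJ m₁ m₂) := by
    have hS' := (hSk (k + 1)).1.isUnit
    rw [hSsucc] at hS'
    rw [hC, hWk, hWk, hWk, hWk, hSsucc, hΛsucc]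
    exact potential_mul_transferMatrix_at_I hα hj hjH (hSk k).1.isUnit hS' hI hnegI (hSk k).2
  simp only [hHm, hHp, hP₁, hP₂, Matrix.mul_smul, Matrix.smul_mul, smul_smul,
    mul_inv_cancel₀ (two_ne_zero' ℂ), one_smul]
  obtain ⟨hm₁, hm₂⟩ := mul_eq_zero_of_intertwines hfac.2 (hunit k).2 (hunit (k + 1)).2
    (one_add_mul_one_sub_of_mul_self hj) (one_sub_mul_one_add_of_mul_self hj)
  obtain ⟨hp₁, hp₂⟩ := mul_eq_zero_of_intertwines hfac.1 (hunit k).1 (hunit (k + 1)).1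
    (one_sub_mul_one_add_of_mul_self hj) (one_add_mul_one_sub_of_mul_self hj)
  exact ⟨hm₁, hm₂, hp₁, hp₂⟩
end
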